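/- arXiv:2511.10619 — 2 statements merged into one kernel-verified Lean document; each statement's English description precedes it below -/
import Mathlib

section
/- For every real α in (0,1] and every integer k' ≥ 1, setting γ = α/(α+1), we have 1/k' + (1 - 1/k')·(1 + (2·k'^γ)^{1/α})^{-α} ≥ 1/(2·(k'+1)^γ). -/
/-!
Put `A = k'^γ` and `x = (2A)^(1/α)`, so that `x^(-α) = 1/(2A)`. Since `γ/α = 1 - γ`, the two powers
balance: `A^(1/α) · A = k'`, whence `x ≥ 2k'/A`. Writing `1 + x = x (1 + 1/x)` and using Bernoulli's
inequality `(1 + u)^(-α) ≥ 1 - α u` gives `(1 + x)^(-α) ≥ (1 - α A/(2k'))/(2A)`, and with this lower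
bound the left side is at least `1/(2A) ≥ 1/(2(k'+1)^γ)` by elementary algebra.
-/

open Real

theorem one_sub_mul_le_one_add_rpow_neg {u α : ℝ} (hu : 0 ≤ u) (hα0 : 0 ≤ α) (hα1 : α ≤ 1) :
    1 - α * u ≤ (1 + u) ^ (-α) := by
  have hbern : (1 + u) ^ α ≤ 1 + α * u :=
    rpow_one_add_le_one_add_mul_self (by linarith) hα0 hα1
  have hαu : 0 ≤ α * u := mul_nonneg hα0 hu
  rw [rpow_neg (by linarith)]
  calc 1 - α * u ≤ (1 + α * u)⁻¹ := by
        rw [← one_div, le_div_iff₀ (by linarith)]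
        nlinarith
    _ ≤ ((1 + u) ^ α)⁻¹ := inv_anti₀ (by positivity) hbern

theorem mul_one_sub_div_le_one_add_rpow_neg {x α : ℝ} (hx : 0 < x) (hα0 : 0 ≤ α) (hα1 : α ≤ 1) :
    x ^ (-α) * (1 - α / x) ≤ (1 + x) ^ (-α) := by
  have hsplit : 1 + x = x * (1 + x⁻¹) := by field_simp; ring
  rw [hsplit, mul_rpow hx.le (by positivity), div_eq_mul_inv]
  exact mul_le_mul_of_nonneg_left
    (one_sub_mul_le_one_add_rpow_neg (by positivity) hα0 hα1) (by positivity)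

theorem rpow_div_add_one_rpow_one_div_mul_self {K α : ℝ} (hK : 0 ≤ K) (hα : 0 < α) :
    (K ^ (α / (α + 1))) ^ (1 / α) * K ^ (α / (α + 1)) = K := by
  have hexp : α / (α + 1) * (1 / α) + α / (α + 1) = 1 := by field_simp; ring
  rw [← rpow_mul hK, ← rpow_add' hK (by rw [hexp]; exact one_ne_zero), hexp, rpow_one]

theorem le_one_div_add_one_sub_one_div_mul {α K A c : ℝ} (hα1 : α ≤ 1)
    (hK : 1 ≤ K) (hA : 1 ≤ A) (hc : (1 - α * (A / (2 * K))) / (2 * A) ≤ c) :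
    1 / (2 * A) ≤ 1 / K + (1 - 1 / K) * c := by
  have hK0 : 0 < K := by linarith
  have hweight : 0 ≤ 1 - 1 / K := by rw [sub_nonneg, div_le_one hK0]; exact hK
  calc 1 / (2 * A) ≤ 1 / K + (1 - 1 / K) * ((1 - α * (A / (2 * K))) / (2 * A)) := by
        rw [← sub_nonneg]
        have hdiff : 1 / K + (1 - 1 / K) * ((1 - α * (A / (2 * K))) / (2 * A)) - 1 / (2 * A) =
            (2 * A - 1 - α * (K - 1) * (A / (2 * K))) / (2 * A * K) := by
          field_simp; ring
        have hloss : (K - 1) * (A / (2 * K)) ≤ A / 2 := by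
          rw [mul_div_assoc', div_le_div_iff₀ (by positivity) two_pos]
          nlinarith
        rw [hdiff]
        apply div_nonneg _ (by positivity)
        nlinarith [mul_le_mul_of_nonneg_right hα1 (by positivity : 0 ≤ (K - 1) * (A / (2 * K)))]
    _ ≤ 1 / K + (1 - 1 / K) * c := by gcongr

theorem one_sub_div_le_one_add_two_mul_rpow_rpow_neg {K α : ℝ} (hK : 0 < K) (hα0 : 0 < α)
    (hα1 : α ≤ 1) :
    (1 - α * (K ^ (α / (α + 1)) / (2 * K))) / (2 * K ^ (α / (α + 1)))
      ≤ (1 + (2 * K ^ (α / (α + 1))) ^ (1 / α)) ^ (-α) := by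
  set A := K ^ (α / (α + 1))
  have hA : 0 < A := by positivity
  set x := (2 * A) ^ (1 / α)
  have hx : 2 * K / A ≤ x := by
    have hbalance : A ^ (1 / α) * A = K := rpow_div_add_one_rpow_one_div_mul_self hK.le hα0
    calc 2 * K / A = 2 * A ^ (1 / α) := by rw [← hbalance]; field_simp
      _ ≤ 2 ^ (1 / α) * A ^ (1 / α) := by
        gcongr
        exact self_le_rpow_of_one_le one_le_two (by rw [le_div_iff₀ hα0]; linarith)
      _ = x := (mul_rpow zero_le_two hA.le).symm
  have hx0 : 0 < x := (div_pos (by positivity) hA).trans_le hx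
  have hxα : x ^ (-α) = 1 / (2 * A) := by
    rw [← rpow_mul (by positivity), show 1 / α * -α = -1 by field_simp, rpow_neg_one, one_div]
  have hinv : 1 / x ≤ A / (2 * K) :=
    (one_div_le_one_div_of_le (by positivity) hx).trans_eq (one_div_div _ _)
  calc (1 - α * (A / (2 * K))) / (2 * A) ≤ x ^ (-α) * (1 - α / x) := by
        rw [hxα, one_div_mul_eq_div, div_eq_mul_one_div α x]
        gcongr
    _ ≤ (1 + x) ^ (-α) := mul_one_sub_div_le_one_add_rpow_neg hx0 hα0.le hα1

theorem stmt_1 (α : ℝ) (hα : α ∈ Set.Ioc (0:ℝ) 1) (k' : ℕ) (hk : 1 ≤ k')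
    (γ : ℝ) (hγ : γ = α / (α + 1)) :
    1 / (k' : ℝ) + (1 - 1 / (k' : ℝ)) * (1 + (2 * (k' : ℝ) ^ γ) ^ (1 / α)) ^ (-α)
      ≥ 1 / (2 * ((k' : ℝ) + 1) ^ γ) := by
  obtain ⟨hα0, hα1⟩ := hα
  subst hγ
  have hK : (1 : ℝ) ≤ k' := by exact_mod_cast hk
  have hA : 1 ≤ (k' : ℝ) ^ (α / (α + 1)) := one_le_rpow hK (by positivity)
  have hmono : 1 / (2 * ((k' : ℝ) + 1) ^ (α / (α + 1))) ≤ 1 / (2 * (k' : ℝ) ^ (α / (α + 1))) := by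
    gcongr
    linarith
  exact hmono.trans (le_one_div_add_one_sub_one_div_mul hα1 hK hA
    (one_sub_div_le_one_add_two_mul_rpow_rpow_neg (by linarith) hα0 hα1))
end

section
/- Let α ∈ (0,1], γ = α/(α+1), m > 0, τ ≥ 1. Define V : ℕ × ℕ → ℝ satisfying V(τ', 1) ≥ (m/((α+1)τ^α))·(τ')^{α+1} for all τ' ≥ 0, and for k' ≥ 2: V(τ', k') ≥ (1/k')·(m/((α+1)τ^α))·(τ')^{α+1} + (1 - 1/k')·min over y ∈ [0,1] of [(m/((α+1)τ^α))·(τ')^{α+1}·(y^{α+1} + (1/(2·k'^γ))·(1-y)^{α+1})]. Then V(τ', k') ≥ (m/((α+1)τ^α))·(τ')^{α+1}/(2(k'+1)^γ) for all τ' ≥ 0 and k' ≥ 1. -/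
lemma jensen2 (w₁ w₂ z₁ z₂ : ℝ) (hw₁ : 0 ≤ w₁) (hw₂ : 0 ≤ w₂) (hz₁ : 0 ≤ z₁)
    (hz₂ : 0 ≤ z₂) (hw : w₁ + w₂ = 1) {p : ℝ} (hp : 1 ≤ p) :
    (w₁ * z₁ + w₂ * z₂) ^ p ≤ w₁ * z₁ ^ p + w₂ * z₂ ^ p := by
  have h := Real.rpow_arith_mean_le_arith_mean_rpow Finset.univ ![w₁, w₂] ![z₁, z₂]
    (by intro i _; fin_cases i <;> assumption)
    (by simp [Fin.sum_univ_succ, hw])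
    (by intro i _; fin_cases i <;> assumption) hp
  simpa [Fin.sum_univ_succ] using h

lemma key {α v y : ℝ} (hα : 0 < α) (hα1 : α ≤ 1) (hv : 0 < v) (hy0 : 0 ≤ y) (hy1 : y ≤ 1) :
    (1 + v) ^ (-α) ≤ y ^ (α + 1) + v ^ (-α) * (1 - y) ^ (α + 1) := by
  have h1v : (0:ℝ) < 1 + v := by linarith
  set p : ℝ := α + 1 with hp
  have hp1 : 1 ≤ p := by simp [hp]; linarith
  have hy1' : 0 ≤ 1 - y := by linarith
  have h1vp : (0:ℝ) < (1+v)^p := Real.rpow_pos_of_pos h1v p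
  have hvp : (0:ℝ) < v^p := Real.rpow_pos_of_pos hv p
  have a1 : (1+v)^α = (1+v)^p / (1+v) := by
    rw [show α = p - 1 by rw [hp]; ring, Real.rpow_sub h1v, Real.rpow_one]
  have a2 : v^(-α) = v / v^p := by
    rw [show -α = 1 - p by rw [hp]; ring, Real.rpow_sub hv, Real.rpow_one]
  have key1 : 1 ≤ (1 + v) ^ α * (y ^ p + v ^ (-α) * (1 - y) ^ p) := by
    have h := jensen2 (1/(1+v)) (v/(1+v)) ((1+v)*y) ((1+v)/v*(1-y))
      (by positivity) (by positivity) (by positivity) (by positivity)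
      (by field_simp) hp1
    have e0 : (1/(1+v)) * ((1+v)*y) + (v/(1+v)) * ((1+v)/v*(1-y)) = 1 := by
      field_simp; ring
    rw [e0, Real.one_rpow] at h
    have e1 : (1/(1+v)) * ((1+v)*y) ^ p = (1+v)^α * y^p := by
      rw [Real.mul_rpow h1v.le hy0, a1]; field_simp
    have e2 : (v/(1+v)) * ((1+v)/v*(1-y)) ^ p = (1+v)^α * (v^(-α) * (1-y)^p) := by
      rw [Real.mul_rpow (by positivity) hy1', Real.div_rpow h1v.le hv.le, a1, a2]
      field_simp
    rw [e1, e2] at h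
    calc (1:ℝ) ≤ _ := h
      _ = (1 + v) ^ α * (y ^ p + v ^ (-α) * (1 - y) ^ p) := by ring
  have hpos : (0:ℝ) < (1+v)^α := Real.rpow_pos_of_pos h1v α
  calc (1+v)^(-α) = (1+v)^(-α) * 1 := by ring
    _ ≤ (1+v)^(-α) * ((1 + v) ^ α * (y ^ p + v ^ (-α) * (1 - y) ^ p)) := by
        apply mul_le_mul_of_nonneg_left key1 (by positivity)
    _ = ((1+v)^(-α) * (1+v)^α) * (y ^ p + v ^ (-α) * (1 - y) ^ p) := by ring
    _ = y ^ p + v ^ (-α) * (1 - y) ^ p := by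
        rw [← Real.rpow_add h1v]; norm_num

lemma arith {α γ k : ℝ} (hα : 0 < α) (hα1 : α ≤ 1) (hγ : γ = α/(α+1)) (hk : 2 ≤ k) :
    1/(2*(k+1)^γ) ≤ 1/k + (1 - 1/k) * (1 + (2*k^γ)^(1/α)) ^ (-α) := by
  have hk0 : (0:ℝ) < k := by linarith
  have hγ0 : 0 < γ := by rw [hγ]; positivity
  have hγ1 : γ ≤ 1 := by rw [hγ, div_le_one (by linarith)]; linarith
  have hkγ : (0:ℝ) < k^γ := Real.rpow_pos_of_pos hk0 γ
  have hkγ1 : (1:ℝ) ≤ k^γ := Real.one_le_rpow (by linarith) hγ0.le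
  set c : ℝ := 1/(2*k^γ) with hc
  set v : ℝ := (2*k^γ)^(1/α) with hv
  have hvpos : 0 < v := Real.rpow_pos_of_pos (by positivity) _
  have hcv : v^(-α) = c := by
    rw [hv, ← Real.rpow_mul (by positivity), show (1/α)*(-α) = -1 by field_simp,
      Real.rpow_neg_one, hc]; ring
  have hc2 : c ≤ 1/2 := by
    rw [hc, div_le_div_iff₀ (by positivity) (by norm_num)]; linarith
  have hc0 : 0 < c := by positivity
  have hvlb : 2 * k^(1-γ) ≤ v := by
    have e : v = 2^(1/α) * k^(γ*(1/α)) := by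
      rw [hv, Real.mul_rpow (by norm_num) hkγ.le, ← Real.rpow_mul hk0.le]
    have h2 : (2:ℝ) ≤ 2^(1/α) := by
      calc (2:ℝ) = 2^(1:ℝ) := by norm_num
        _ ≤ 2^(1/α) := Real.rpow_le_rpow_of_exponent_le (by norm_num)
            (by rw [le_div_iff₀ hα]; linarith)
    have e2 : γ*(1/α) = 1-γ := by rw [hγ]; field_simp; ring
    rw [e, e2]
    exact mul_le_mul_of_nonneg_right h2 (Real.rpow_pos_of_pos hk0 _).le
  have hcvk : c/v ≤ 1/(4*k) := by
    rw [hc, div_div, div_le_div_iff₀ (by positivity) (by positivity)]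
    have e3 : k^γ * k^(1-γ) = k := by
      rw [← Real.rpow_add hk0]; norm_num
    nlinarith [mul_le_mul_of_nonneg_left hvlb (by positivity : (0:ℝ) ≤ 2*k^γ)]
  have hM : c - c/v ≤ (1+v)^(-α) := by
    have h1v : (0:ℝ) < 1 + v := by linarith
    have hx0 : (0:ℝ) < v/(1+v) := by positivity
    have hx1 : v/(1+v) ≤ 1 := by rw [div_le_one h1v]; linarith
    have step : (v/(1+v))^(1:ℝ) ≤ (v/(1+v))^α :=
      Real.rpow_le_rpow_of_exponent_ge hx0 hx1 hα1
    rw [Real.rpow_one] at step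
    have eq1 : (1+v)^(-α) = c * (v/(1+v))^α := by
      rw [← hcv, Real.div_rpow hvpos.le h1v.le, Real.rpow_neg hvpos.le, Real.rpow_neg h1v.le]
      field_simp
    rw [eq1]
    calc c - c/v ≤ c * (v/(1+v)) := by
          have h1 : 1 - 1/v ≤ v/(1+v) := by
            rw [← sub_nonneg]
            have e : v/(1+v) - (1-1/v) = 1/(v*(1+v)) := by field_simp; ring
            rw [e]; positivity
          have := mul_le_mul_of_nonneg_left h1 hc0.le
          calc c - c/v = c * (1 - 1/v) := by field_simp
            _ ≤ c * (v/(1+v)) := this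
      _ ≤ c * (v/(1+v))^α := mul_le_mul_of_nonneg_left step hc0.le
  have h1k : 0 ≤ 1 - 1/k := by
    have : 1/k ≤ 1/2 := by rw [div_le_div_iff₀ hk0 (by norm_num)]; linarith
    linarith
  have hfin : c ≤ 1/k + (1 - 1/k) * (c - 1/(4*k)) := by
    have expand : 1/k + (1 - 1/k) * (c - 1/(4*k)) - c
        = (3/(4*k) - c/k) + 1/(4*k^2) := by field_simp; ring
    have h2 : c/k ≤ 3/(4*k) := by
      rw [div_le_div_iff₀ hk0 (by positivity)]; nlinarith
    have h3 : (0:ℝ) < 1/(4*k^2) := by positivity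
    linarith
  calc 1/(2*(k+1)^γ) ≤ c := by
        rw [hc]
        apply one_div_le_one_div_of_le (by positivity)
        have : k^γ ≤ (k+1)^γ := Real.rpow_le_rpow hk0.le (by linarith) hγ0.le
        linarith
    _ ≤ 1/k + (1 - 1/k) * (c - 1/(4*k)) := hfin
    _ ≤ 1/k + (1 - 1/k) * (1 + v) ^ (-α) := by
        have : c - 1/(4*k) ≤ (1+v)^(-α) := by
          have : c - 1/(4*k) ≤ c - c/v := by linarith
          linarith
        nlinarith [mul_le_mul_of_nonneg_left this h1k]

theorem stmt_13 (α γ m τ : ℝ) (hα : α ∈ Set.Ioc (0:ℝ) 1) (hγ : γ = α / (α + 1))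
    (hm : 0 < m) (hτ : 1 ≤ τ)
    (C : ℕ → ℝ) (hC : ∀ τ' : ℕ, C τ' = (m / ((α + 1) * τ ^ α)) * ((τ' : ℝ)) ^ (α + 1))
    (V : ℕ → ℕ → ℝ)
    (hbase : ∀ τ' : ℕ, V τ' 1 ≥ C τ')
    (hrec : ∀ (τ' k' : ℕ), 2 ≤ k' →
      V τ' k' ≥ (1 / (k' : ℝ)) * C τ' + (1 - 1 / (k' : ℝ)) *
        sInf ((fun y : ℝ => C τ' * (y ^ (α + 1) +
          (1 / (2 * (k' : ℝ) ^ γ)) * (1 - y) ^ (α + 1))) '' Set.Icc 0 1)) :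
    ∀ (τ' k' : ℕ), 1 ≤ k' → V τ' k' ≥ C τ' / (2 * ((k' : ℝ) + 1) ^ γ) := by
  obtain ⟨hα0, hα1⟩ := hα
  have hτ0 : (0:ℝ) < τ := by linarith
  have hγ0 : 0 < γ := by rw [hγ]; positivity
  intro τ' k' hk'
  have hC0 : 0 ≤ C τ' := by
    rw [hC]
    have h1 : (0:ℝ) < τ^α := Real.rpow_pos_of_pos hτ0 α
    have h2 : (0:ℝ) ≤ ((τ':ℕ):ℝ) := Nat.cast_nonneg _
    positivity
  rcases eq_or_lt_of_le hk' with h1 | h2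
  · -- k' = 1
    subst h1
    have hb := hbase τ'
    have hle : C τ' / (2*(((1:ℕ):ℝ)+1)^γ) ≤ C τ' := by
      apply div_le_self hC0
      have : (1:ℝ) ≤ ((1:ℝ)+1)^γ := Real.one_le_rpow (by norm_num) hγ0.le
      push_cast
      linarith
    exact le_trans hle hb
  · -- 2 ≤ k'
    have hk2 : 2 ≤ k' := h2
    have hrec' := hrec τ' k' hk2
    set k : ℝ := (k' : ℝ) with hkdef
    have hkR : (2:ℝ) ≤ k := by rw [hkdef]; exact_mod_cast hk2
    have hk0 : (0:ℝ) < k := by linarith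
    have hkγ : (0:ℝ) < k^γ := Real.rpow_pos_of_pos hk0 γ
    set v : ℝ := (2*k^γ)^(1/α) with hv
    have hvpos : 0 < v := Real.rpow_pos_of_pos (by positivity) _
    have hcv : v^(-α) = 1/(2*k^γ) := by
      rw [hv, ← Real.rpow_mul (by positivity), show (1/α)*(-α) = -1 by field_simp,
        Real.rpow_neg_one]
      ring
    have h1k : 0 ≤ 1 - 1/k := by
      have : 1/k ≤ 1/2 := by
        rw [div_le_div_iff₀ hk0 (by norm_num)]; linarith
      linarith
    have hinf : C τ' * (1+v)^(-α) ≤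
        sInf ((fun y : ℝ => C τ' * (y ^ (α + 1) +
          (1 / (2 * k ^ γ)) * (1 - y) ^ (α + 1))) '' Set.Icc 0 1) := by
      apply le_csInf
      · exact ⟨_, Set.mem_image_of_mem _ (Set.mem_Icc.mpr ⟨le_refl (0:ℝ), zero_le_one⟩)⟩
      · rintro b ⟨y, hy, rfl⟩
        simp only
        have hkey := key hα0 hα1 hvpos hy.1 hy.2
        rw [hcv] at hkey
        exact mul_le_mul_of_nonneg_left hkey hC0
    have harith := arith hα0 hα1 hγ hkR
    have step2 : (1 - 1/k) * (C τ' * (1+v)^(-α)) ≤ (1 - 1/k) *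
        sInf ((fun y : ℝ => C τ' * (y ^ (α + 1) +
          (1 / (2 * k ^ γ)) * (1 - y) ^ (α + 1))) '' Set.Icc 0 1) :=
      mul_le_mul_of_nonneg_left hinf h1k
    have chain : C τ' / (2*(k+1)^γ) ≤ (1/k) * C τ' + (1 - 1/k) * (C τ' * (1+v)^(-α)) := by
      calc C τ' / (2*(k+1)^γ) = C τ' * (1/(2*(k+1)^γ)) := by ring
        _ ≤ C τ' * (1/k + (1-1/k)*(1+v)^(-α)) := mul_le_mul_of_nonneg_left harith hC0
        _ = (1/k) * C τ' + (1 - 1/k) * (C τ' * (1+v)^(-α)) := by ring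
    exact le_trans chain (le_trans (by linarith) hrec')
end
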